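/- (Chen's identity.) Let X : [0,1] → ℝ^d be a continuously differentiable path, let 0 ≤ s < t < u ≤ 1, and let (i₁,…,i_k) ∈ {1,…,d}^k be a multi-index. Then S^{(i₁,…,i_k)}_{[s,u]}(X) = Σ_{ℓ=0}^{k} S^{(i₁,…,i_ℓ)}_{[s,t]}(X) · S^{(i_{ℓ+1},…,i_k)}_{[t,u]}(X), where the ℓ = 0 and ℓ = k terms use the convention that the empty-index coefficient equals 1. -/

import Mathlib

open MeasureTheory ProbabilityTheory
open scoped RealInnerProductSpace BigOperators ENNReal

noncomputable section

/-- Index set for the signature truncated at order `m` of a `d`-dimensional path: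
multi-indices `(i₁, …, i_k) ∈ {1,…,d}^k` with `k ≤ m`. -/
abbrev SigIdx (d m : ℕ) := Σ k : Fin (m + 1), (Fin (k : ℕ) → Fin d)

/-- Signature coefficient of a path `X` along the multi-index `I` on `[a, b]`:
the integral over the simplex `{a ≤ u₁ < ⋯ < u_k ≤ b}` of the product of the
derivatives of the coordinates of `X` selected by `I`. -/
def sigCoeffOn {d : ℕ} (X : ℝ → EuclideanSpace ℝ (Fin d)) {k : ℕ}
    (I : Fin k → Fin d) (a b : ℝ) : ℝ :=
  ∫ u in {u : Fin k → ℝ | (∀ i, u i ∈ Set.Icc a b) ∧ StrictMono u},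
    ∏ i, deriv (fun t => X t (I i)) (u i)

/-- Signature coefficient on `[0, 1]`. -/
def sigCoeff {d : ℕ} (X : ℝ → EuclideanSpace ℝ (Fin d)) {k : ℕ}
    (I : Fin k → Fin d) : ℝ :=
  sigCoeffOn X I 0 1

/-- Signature of `X` truncated at order `m`, as a vector of `ℝ^{s_d(m)}`
with the Euclidean norm. -/
def truncSig (d m : ℕ) (X : ℝ → EuclideanSpace ℝ (Fin d)) :
    EuclideanSpace ℝ (SigIdx d m) :=
  (WithLp.equiv 2 (SigIdx d m → ℝ)).symm fun p => sigCoeff X p.2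

/-- Total variation of a continuously differentiable path on `[0,1]`. -/
def pathTV {d : ℕ} (X : ℝ → EuclideanSpace ℝ (Fin d)) : ℝ :=
  ∫ t in (0:ℝ)..1, ‖deriv X t‖

/-- `s_d(m) = Σ_{k=0}^m d^k`, as a real number. -/
def sdim (d m : ℕ) : ℝ := ∑ k ∈ Finset.range (m + 1), (d : ℝ) ^ k

variable {Ω : Type*} [MeasurableSpace Ω]

/-- Theoretical risk `R_m(β) = E (Y − ⟨β, S^m(X)⟩)²`. -/
def risk (P : Measure Ω) (d : ℕ) (X : Ω → ℝ → EuclideanSpace ℝ (Fin d))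
    (Y : Ω → ℝ) (m : ℕ) (β : EuclideanSpace ℝ (SigIdx d m)) : ℝ :=
  ∫ ω, (Y ω - ⟪β, truncSig d m (X ω)⟫) ^ 2 ∂P

/-- `L(m) = inf_{‖β‖ ≤ α} R_m(β)`. -/
def Lfun (P : Measure Ω) (d : ℕ) (X : Ω → ℝ → EuclideanSpace ℝ (Fin d))
    (Y : Ω → ℝ) (α : ℝ) (m : ℕ) : ℝ :=
  sInf (risk P d X Y m '' Metric.closedBall 0 α)

/-- Empirical risk `R̂_{m,n}(β) = (1/n) Σ_{i<n} (Y_i − ⟨β, S^m(X_i)⟩)²`. -/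
def empRisk (d : ℕ) (Xs : ℕ → Ω → ℝ → EuclideanSpace ℝ (Fin d))
    (Ys : ℕ → Ω → ℝ) (n m : ℕ) (β : EuclideanSpace ℝ (SigIdx d m)) (ω : Ω) : ℝ :=
  (1 / n : ℝ) * ∑ i ∈ Finset.range n, (Ys i ω - ⟪β, truncSig d m (Xs i ω)⟫) ^ 2

/-- `L̂_n(m) = min_{‖β‖ ≤ α} R̂_{m,n}(β)`. -/
def empL (d : ℕ) (Xs : ℕ → Ω → ℝ → EuclideanSpace ℝ (Fin d))
    (Ys : ℕ → Ω → ℝ) (α : ℝ) (n m : ℕ) (ω : Ω) : ℝ :=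
  sInf ((fun β => empRisk d Xs Ys n m β ω) '' Metric.closedBall 0 α)

/-- Penalization `pen_n(m) = K_pen n^{−ρ} √(s_d(m))`. -/
def pen (d : ℕ) (Kpen ρ : ℝ) (n m : ℕ) : ℝ :=
  Kpen * (n : ℝ) ^ (-ρ) * Real.sqrt (sdim d m)

/-- The estimator `m̂`: the smallest minimizer of `m ↦ L̂_n(m) + pen_n(m)`. -/
def hatm (d : ℕ) (Xs : ℕ → Ω → ℝ → EuclideanSpace ℝ (Fin d))
    (Ys : ℕ → Ω → ℝ) (α Kpen ρ : ℝ) (n : ℕ) (ω : Ω) : ℕ :=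
  sInf {m : ℕ | ∀ k : ℕ,
    empL d Xs Ys α n m ω + pen d Kpen ρ n m ≤ empL d Xs Ys α n k ω + pen d Kpen ρ n k}

/-- Centered empirical risk process `Z_{m,n}(β) = R̂_{m,n}(β) − R_m(β)`. -/
def Zproc (P : Measure Ω) (d : ℕ) (X : Ω → ℝ → EuclideanSpace ℝ (Fin d)) (Y : Ω → ℝ)
    (Xs : ℕ → Ω → ℝ → EuclideanSpace ℝ (Fin d)) (Ys : ℕ → Ω → ℝ)
    (n m : ℕ) (β : EuclideanSpace ℝ (SigIdx d m)) (ω : Ω) : ℝ :=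
  empRisk d Xs Ys n m β ω - risk P d X Y m β

/-!
Split the simplex `{s ≤ u₁ < ⋯ < u_k ≤ u}` according to the number `ℓ` of coordinates below `t`.
Concatenation of tuples identifies the `ℓ`-th piece with the product of the `ℓ`-simplex over
`[s, t)` and the `(k - ℓ)`-simplex over `[t, u]`; the half-open interval differs from `[s, t]`
by a null set, and Fubini factors the integral of the product integrand over this product.
-/

namespace Chen

open Set

def strictMonoTuples (S : Set ℝ) (n : ℕ) : Set (Fin n → ℝ) :=
  {x | (∀ i, x i ∈ S) ∧ StrictMono x}

def simplexPiece (s t u : ℝ) (n ℓ : ℕ) : Set (Fin n → ℝ) :=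
  strictMonoTuples (Icc s u) n ∩ {x | ∀ i, x i < t ↔ (i : ℕ) < ℓ}

lemma strictMonoTuples_subset_pi (S : Set ℝ) (n : ℕ) :
    strictMonoTuples S n ⊆ univ.pi fun _ => S :=
  fun _ hx i _ => hx.1 i

lemma measurableSet_strictMonoTuples {S : Set ℝ} (hS : MeasurableSet S) (n : ℕ) :
    MeasurableSet (strictMonoTuples S n) := by
  simp only [strictMonoTuples, StrictMono, ofPred_and, ofPred_forall]
  exact .inter (.iInter fun i => measurable_pi_apply i hS) (.iInter fun i => .iInter fun j =>
    .iInter fun _ => measurableSet_lt (measurable_pi_apply i) (measurable_pi_apply j))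

lemma measurableSet_simplexPiece (s t u : ℝ) (n ℓ : ℕ) :
    MeasurableSet (simplexPiece s t u n ℓ) := by
  refine (measurableSet_strictMonoTuples measurableSet_Icc n).inter ?_
  rw [ofPred_forall]
  refine .iInter fun i => ?_
  by_cases hi : (i : ℕ) < ℓ
  · simpa [hi] using measurableSet_lt (measurable_pi_apply i) measurable_const
  · simpa [hi] using measurableSet_le measurable_const (measurable_pi_apply i)

lemma strictMonoTuples_ae_eq {S T : Set ℝ} (h : S =ᵐ[volume] T) (n : ℕ) :
    strictMonoTuples S n =ᵐ[volume] strictMonoTuples T n := by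
  have hpi : ∀ S : Set ℝ, strictMonoTuples S n = (univ.pi fun _ => S) ∩ {x | StrictMono x} :=
    fun S => by ext; simp [strictMonoTuples]
  rw [hpi, hpi]
  exact (Measure.ae_eq_set_pi fun _ _ => h).inter (Filter.EventuallyEq.refl _ _)

lemma exists_lt_iff_lt_of_monotone {α : Type*} [Preorder α] {n : ℕ} {x : Fin n → α}
    (hx : Monotone x) (t : α) : ∃ ℓ ≤ n, ∀ i, x i < t ↔ (i : ℕ) < ℓ := by
  classical
  set below := Finset.univ.filter fun i => x i < t
  refine ⟨below.card, (Finset.card_filter_le _ _).trans (by simp), fun i => ⟨fun hi => ?_, ?_⟩⟩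
  · have : Finset.Iic i ⊆ below := fun j hj => by
      simpa [below] using (hx (Finset.mem_Iic.mp hj)).trans_lt hi
    simpa using Finset.card_le_card this
  · contrapose
    intro hi
    have : below ⊆ Finset.Iio i := fun j hj => by
      simp only [below, Finset.mem_filter, Finset.mem_univ, true_and] at hj
      exact Finset.mem_Iio.mpr (lt_of_not_ge fun hij => hi ((hx hij).trans_lt hj))
    simpa using Finset.card_le_card this

lemma strictMonoTuples_eq_iUnion_simplexPiece (s t u : ℝ) (n : ℕ) :
    strictMonoTuples (Icc s u) n = ⋃ ℓ : Fin (n + 1), simplexPiece s t u n ℓ := by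
  ext x
  simp only [mem_iUnion, simplexPiece, mem_inter_iff, mem_ofPred_eq]
  refine ⟨fun hx => ?_, fun ⟨_, hx, _⟩ => hx⟩
  obtain ⟨ℓ, hℓ, hiff⟩ := exists_lt_iff_lt_of_monotone hx.2.monotone t
  exact ⟨⟨ℓ, Nat.lt_succ_of_le hℓ⟩, hx, hiff⟩

lemma pairwise_disjoint_simplexPiece (s t u : ℝ) (n : ℕ) :
    Pairwise (Function.onFun Disjoint fun ℓ : Fin (n + 1) => simplexPiece s t u n ℓ) := by
  intro a b hab
  refine disjoint_left.mpr fun x ⟨_, ha⟩ ⟨_, hb⟩ => hab (Fin.ext ?_)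
  by_contra hne
  rcases lt_or_gt_of_ne hne with h | h
  · exact lt_irrefl _ ((ha ⟨a, by omega⟩).mp ((hb ⟨a, by omega⟩).mpr h))
  · exact lt_irrefl _ ((hb ⟨b, by omega⟩).mp ((ha ⟨b, by omega⟩).mpr h))

lemma strictMono_append_iff {ℓ m : ℕ} {x : Fin ℓ → ℝ} {y : Fin m → ℝ} :
    StrictMono (Fin.append x y) ↔ StrictMono x ∧ StrictMono y ∧ ∀ i j, x i < y j := by
  refine ⟨fun h => ⟨fun i j hij => ?_, fun i j hij => ?_, fun i j => ?_⟩, ?_⟩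
  · simpa using h (Fin.strictMono_castAdd m hij)
  · simpa using h (Fin.strictMono_natAdd ℓ hij)
  · simpa using h (show Fin.castAdd m i < Fin.natAdd ℓ j by simp [Fin.lt_def]; omega)
  rintro ⟨hx, hy, hxy⟩ i j hij
  induction i using Fin.addCases <;> induction j using Fin.addCases <;>
    simp only [Fin.append_left, Fin.append_right] at hij ⊢
  · exact hx ((Fin.strictMono_castAdd m).lt_iff_lt.mp hij)
  · exact hxy _ _
  · simp [Fin.lt_def] at hij; omega
  · exact hy ((Fin.strictMono_natAdd ℓ).lt_iff_lt.mp hij)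

lemma append_mem_simplexPiece_iff {s t u : ℝ} (hst : s ≤ t) (htu : t ≤ u) {ℓ m : ℕ}
    {x : Fin ℓ → ℝ} {y : Fin m → ℝ} :
    Fin.append x y ∈ simplexPiece s t u (ℓ + m) ℓ ↔
      x ∈ strictMonoTuples (Ico s t) ℓ ∧ y ∈ strictMonoTuples (Icc t u) m := by
  simp only [simplexPiece, strictMonoTuples, mem_inter_iff, mem_ofPred_eq, Fin.forall_fin_add,
    Fin.append_left, Fin.append_right, strictMono_append_iff, Fin.val_castAdd, Fin.val_natAdd,
    Fin.is_lt, iff_true, add_lt_iff_neg_left, Nat.not_lt_zero, iff_false, not_lt, mem_Icc, mem_Ico]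
  constructor
  · rintro ⟨⟨⟨hxI, hyI⟩, hx, hy, -⟩, hxt, hty⟩
    exact ⟨⟨fun i => ⟨(hxI i).1, hxt i⟩, hx⟩, fun j => ⟨hty j, (hyI j).2⟩, hy⟩
  · rintro ⟨⟨hxI, hx⟩, hyI, hy⟩
    exact ⟨⟨⟨fun i => ⟨(hxI i).1, (hxI i).2.le.trans htu⟩,
      fun j => ⟨hst.trans (hyI j).1, (hyI j).2⟩⟩, hx, hy, fun i j => (hxI i).2.trans_le (hyI j).1⟩,
      fun i => (hxI i).2, fun j => (hyI j).1⟩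

def appendMeasurableEquiv (ℓ m : ℕ) : ((Fin ℓ → ℝ) × (Fin m → ℝ)) ≃ᵐ (Fin (ℓ + m) → ℝ) :=
  (Fin.appendHomeomorph ℓ m).toMeasurableEquiv

@[simp]
lemma appendMeasurableEquiv_apply {ℓ m : ℕ} (p : (Fin ℓ → ℝ) × (Fin m → ℝ)) :
    appendMeasurableEquiv ℓ m p = Fin.append p.1 p.2 := rfl

lemma measurePreserving_appendMeasurableEquiv (ℓ m : ℕ) :
    MeasurePreserving (appendMeasurableEquiv ℓ m) volume volume := by
  convert (volume_measurePreserving_piCongrLeft (fun _ => ℝ) finSumFinEquiv).comp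
    (volume_measurePreserving_sumPiEquivProdPi_symm fun _ : Fin ℓ ⊕ Fin m => ℝ)
  ext ⟨x, y⟩ i
  simp only [appendMeasurableEquiv_apply, Function.comp_apply]
  induction i using Fin.addCases with
  | left i =>
    rw [Fin.append_left, ← finSumFinEquiv_apply_left]
    exact (Equiv.piCongrLeft_sumInl (fun _ => ℝ) finSumFinEquiv x y i).symm
  | right j =>
    rw [Fin.append_right, ← finSumFinEquiv_apply_right]
    exact (Equiv.piCongrLeft_sumInr (fun _ => ℝ) finSumFinEquiv x y j).symm

lemma setIntegral_simplexPiece_prod {s t u : ℝ} (hst : s ≤ t) (htu : t ≤ u) {ℓ m n : ℕ}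
    (h : ℓ + m = n) (f : Fin n → ℝ → ℝ) :
    ∫ x in simplexPiece s t u n ℓ, ∏ i, f i (x i) =
      (∫ x in strictMonoTuples (Icc s t) ℓ, ∏ i, f (Fin.castLE (by omega) i) (x i)) *
        ∫ y in strictMonoTuples (Icc t u) m, ∏ j, f (Fin.cast h (Fin.natAdd ℓ j)) (y j) := by
  subst h
  have hpre : appendMeasurableEquiv ℓ m ⁻¹' simplexPiece s t u (ℓ + m) ℓ =
      strictMonoTuples (Ico s t) ℓ ×ˢ strictMonoTuples (Icc t u) m := by
    ext ⟨x, y⟩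
    exact append_mem_simplexPiece_iff hst htu
  rw [← (measurePreserving_appendMeasurableEquiv ℓ m).setIntegral_preimage_emb
      (appendMeasurableEquiv ℓ m).measurableEmbedding, hpre, Measure.volume_eq_prod,
    ← setIntegral_congr_set ((strictMonoTuples_ae_eq Ico_ae_eq_Icc ℓ)),
    ← setIntegral_prod_mul]
  simp only [appendMeasurableEquiv_apply, Fin.prod_univ_add, Fin.append_left, Fin.append_right]
  rfl

theorem setIntegral_strictMonoTuples_prod_eq_sum {s t u : ℝ} (hst : s ≤ t) (htu : t ≤ u) {n : ℕ}
    (f : Fin n → ℝ → ℝ)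
    (hf : IntegrableOn (fun x => ∏ i, f i (x i)) (strictMonoTuples (Icc s u) n)) :
    ∫ x in strictMonoTuples (Icc s u) n, ∏ i, f i (x i) =
      ∑ ℓ : Fin (n + 1),
        (∫ x in strictMonoTuples (Icc s t) ℓ,
          ∏ i, f (Fin.castLE (Nat.lt_succ_iff.mp ℓ.isLt) i) (x i)) *
        ∫ y in strictMonoTuples (Icc t u) (n - ℓ),
          ∏ j, f (Fin.cast (Nat.sub_add_cancel (Nat.lt_succ_iff.mp ℓ.isLt)) (j.addNat ℓ))
            (y j) := by
  set piece := fun ℓ : Fin (n + 1) => simplexPiece s t u n ℓ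
  rw [strictMonoTuples_eq_iUnion_simplexPiece s t u n] at hf ⊢
  rw [integral_iUnion_fintype (s := piece) (measurableSet_simplexPiece s t u n ·)
    (pairwise_disjoint_simplexPiece s t u n) fun ℓ => hf.mono_set (subset_iUnion piece ℓ)]
  refine Finset.sum_congr rfl fun ℓ _ => ?_
  rw [setIntegral_simplexPiece_prod hst htu (Nat.add_sub_cancel' (Nat.lt_succ_iff.mp ℓ.isLt))]
  congr 2 with y
  exact Finset.prod_congr rfl fun j _ => congrArg (f · (y j)) (Fin.ext (by simp; omega))

end Chen

open Chen

theorem chen_identity_general {d k : ℕ} (X : ℝ → EuclideanSpace ℝ (Fin d))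
    (hX : ContDiff ℝ 1 X) (s t u : ℝ)
    (hst : s < t) (htu : t < u)
    (I : Fin k → Fin d) :
    sigCoeffOn X I s u =
      ∑ ℓ : Fin (k + 1),
        sigCoeffOn X (I ∘ Fin.castLE (Nat.lt_succ_iff.mp ℓ.isLt)) s t *
          sigCoeffOn X
            (fun j : Fin (k - (ℓ : ℕ)) =>
              I (Fin.cast (Nat.sub_add_cancel (Nat.lt_succ_iff.mp ℓ.isLt)) (j.addNat ℓ)))
            t u := by
  have hderiv : ∀ i, Continuous (deriv fun τ => X τ (I i)) := fun i =>
    ((EuclideanSpace.proj (I i) : _ →L[ℝ] ℝ).contDiff.comp hX).continuous_deriv le_rfl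
  have hint : IntegrableOn (fun x => ∏ i, deriv (fun τ => X τ (I i)) (x i))
      (strictMonoTuples (Set.Icc s u) k) :=
    ((continuous_finsetProd _ fun i _ => (hderiv i).comp (continuous_apply i)).continuousOn
      |>.integrableOn_compact (isCompact_univ_pi fun _ => isCompact_Icc)).mono_set
      (strictMonoTuples_subset_pi _ k)
  exact setIntegral_strictMonoTuples_prod_eq_sum hst.le htu.le _ hint

/-- Chen's identity: for a continuously differentiable path `X`,
`0 ≤ s < t < u ≤ 1` and a multi-index `(i₁,…,i_k)`,
`S^{(i₁,…,i_k)}_{[s,u]}(X) = Σ_{ℓ=0}^{k} S^{(i₁,…,i_ℓ)}_{[s,t]}(X) ⬝ S^{(i_{ℓ+1},…,i_k)}_{[t,u]}(X)`,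
with the convention that the empty-index coefficient equals 1. -/
theorem chen_identity {d k : ℕ} (X : ℝ → EuclideanSpace ℝ (Fin d))
    (hX : ContDiff ℝ 1 X) (s t u : ℝ)
    (hs : 0 ≤ s) (hst : s < t) (htu : t < u) (hu : u ≤ 1)
    (I : Fin k → Fin d) :
    sigCoeffOn X I s u =
      ∑ ℓ : Fin (k + 1),
        sigCoeffOn X (I ∘ Fin.castLE (Nat.lt_succ_iff.mp ℓ.isLt)) s t *
          sigCoeffOn X
            (fun j : Fin (k - (ℓ : ℕ)) =>
              I (Fin.cast (Nat.sub_add_cancel (Nat.lt_succ_iff.mp ℓ.isLt)) (j.addNat ℓ)))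
            t u :=
  chen_identity_general X hX s t u hst htu I
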